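/- arXiv:2306.07145 — 4 statements merged into one kernel-verified Lean document; each statement's English description precedes it below -/
import Mathlib

section
/- Let A = ℚ[t₁^{±1}, t₂^{±1}, t₃^{±1}, w₁^{±1}, …, w_r^{±1}] be a Laurent polynomial ring, set t₄ := (t₁t₂t₃)⁻¹, and let bar : A → A be the ℚ-algebra automorphism sending each variable t₁, t₂, t₃, w₁, …, w_r to its inverse (so bar(t₄) = t₄⁻¹). Let Q₁, Q₂, Q₃, Q₄, K₁, K₂, K₃, K₄ ∈ A be arbitrary, and set Q := Q₁+Q₂+Q₃+Q₄, K := K₁+K₂+K₃+K₄, P := ∏_{l=1}^{4}(1 − t_l), and for j ∈ {1,2,3,4}, Pbar_j := ∏_{l ∈ {1,2,3,4}∖{j}} (1 − t_l⁻¹). Define v := bar(K)·Q − ∑_{j=1}^{4} K_j·t_j·bar(Q) − ∑_{j=1}^{4} Pbar_j·Q_j·bar(Q_j) − ∑_{1≤i<j≤4} Pbar_j·(Q_j·bar(Q_i) + Q_i·bar(Q_j)) and T := bar(K)·Q + K·bar(Q) − P·Q·bar(Q) − ∑_{i=1}^{4} K_i·t_i·bar(Q) − ∑_{i=1}^{4}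 bar(K_i)·t_i⁻¹·Q. Then v + bar(v) = T. -/
noncomputable section

/-- The Laurent polynomial ring `A = ℚ[t₁^{±1}, t₂^{±1}, t₃^{±1}, w₁^{±1}, …, w_r^{±1}]`,
realised as the group algebra of `ℤ^{r+3}` over `ℚ`; the first three coordinates index the
variables `t₁, t₂, t₃` and the remaining `r` coordinates the variables `w₁, …, w_r`. -/
abbrev LaurentRing (r : ℕ) : Type := AddMonoidAlgebra ℚ (Fin (r + 3) → ℤ)

/-- The monomial with exponent vector `e`. -/
def mono (r : ℕ) (e : Fin (r + 3) → ℤ) : LaurentRing r := AddMonoidAlgebra.single e 1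

/-- The `ℚ`-algebra automorphism `bar` sending each variable (hence each monomial)
to its inverse: it is induced by negation of the exponent vectors. -/
def bar (r : ℕ) : LaurentRing r ≃ₐ[ℚ] LaurentRing r :=
  AddMonoidAlgebra.domCongr ℚ ℚ (AddEquiv.neg _)

/-- The exponent vector of the variable `t_a`, `a = 1, …, 4`: for `a ∈ {1,2,3}` this is the
`a`-th coordinate vector, while `t₄ := (t₁t₂t₃)⁻¹` has exponent vector `(-1,-1,-1,0,…,0)`. -/
def texp (r : ℕ) (a : Fin 4) : Fin (r + 3) → ℤ := fun i =>
  if (a : ℕ) = 3 then (if (i : ℕ) < 3 then -1 else 0)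
  else (if (i : ℕ) = (a : ℕ) then 1 else 0)

/-- The variable `t_a` (with `t₄ = (t₁t₂t₃)⁻¹`) as a unit of the Laurent polynomial ring. -/
def tUnit (r : ℕ) (a : Fin 4) : (LaurentRing r)ˣ where
  val := mono r (texp r a)
  inv := mono r (-texp r a)
  val_inv := by
    simp [mono, AddMonoidAlgebra.single_mul_single, AddMonoidAlgebra.one_def]
  inv_val := by
    simp [mono, AddMonoidAlgebra.single_mul_single, AddMonoidAlgebra.one_def]

lemma bar_bar (r : ℕ) (x : LaurentRing r) : bar r (bar r x) = x := by
  have h : (bar r).symm = bar r := by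
    rw [bar, AddMonoidAlgebra.domCongr_symm]; congr 1
  conv_rhs => rw [← (bar r).symm_apply_apply x, h]

lemma bar_tUnit (r : ℕ) (a : Fin 4) :
    bar r (tUnit r a : LaurentRing r) = (((tUnit r a)⁻¹ : (LaurentRing r)ˣ) : LaurentRing r) := by
  show bar r (mono r (texp r a)) = mono r (-(texp r a))
  simp [bar, mono]

lemma bar_tUnit_inv (r : ℕ) (a : Fin 4) :
    bar r (((tUnit r a)⁻¹ : (LaurentRing r)ˣ) : LaurentRing r) = (tUnit r a : LaurentRing r) := by
  show bar r (mono r (-(texp r a))) = mono r (texp r a)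
  simp [bar, mono]

lemma prod_tUnit (r : ℕ) : ∏ l, tUnit r l = 1 := by
  apply Units.ext
  rw [Units.coe_prod, Fin.prod_univ_four]
  show mono r _ * mono r _ * mono r _ * mono r _ = _
  simp only [mono, AddMonoidAlgebra.single_mul_single, one_mul]
  have : texp r 0 + texp r 1 + texp r 2 + texp r 3 = 0 := by
    funext i
    show texp r 0 i + texp r 1 i + texp r 2 i + texp r 3 i = 0
    simp only [texp, Fin.val_zero, Fin.val_one, Fin.val_two, show ((3:Fin 4):ℕ) = 3 from rfl]
    split_ifs <;> simp_all [-Fin.val_eq_zero_iff] <;> omega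
  rw [this]
  rfl
lemma key_lemma (r : ℕ) (j : Fin 4) :
    (∏ l ∈ Finset.univ.erase j, (1 - (((tUnit r l)⁻¹ : (LaurentRing r)ˣ) : LaurentRing r)))
      + bar r (∏ l ∈ Finset.univ.erase j, (1 - (((tUnit r l)⁻¹ : (LaurentRing r)ˣ) : LaurentRing r)))
      = ∏ l, (1 - (tUnit r l : LaurentRing r)) := by
  set E := Finset.univ.erase j with hE
  set X := ∏ l ∈ E, (1 - (tUnit r l : LaurentRing r)) with hX
  have hcard : E.card = 3 := by
    rw [hE, Finset.card_erase_of_mem (Finset.mem_univ j)]; simp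
  have hbar : bar r (∏ l ∈ E, (1 - (((tUnit r l)⁻¹ : (LaurentRing r)ˣ) : LaurentRing r))) = X := by
    rw [map_prod]
    exact Finset.prod_congr rfl fun l _ => by rw [map_sub, map_one, bar_tUnit_inv]
  have hsprod : (∏ l ∈ E, (tUnit r l)⁻¹) = tUnit r j := by
    have h1 : (tUnit r j)⁻¹ * ∏ l ∈ E, (tUnit r l)⁻¹ = 1 := by
      rw [Finset.mul_prod_erase Finset.univ (fun l => (tUnit r l)⁻¹) (Finset.mem_univ j),
        Finset.prod_inv_distrib, prod_tUnit, inv_one]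
    exact (inv_mul_eq_one.mp h1).symm
  have hmain : (∏ l ∈ E, (1 - (((tUnit r l)⁻¹ : (LaurentRing r)ˣ) : LaurentRing r)))
      = -(tUnit r j : LaurentRing r) * X := by
    have hfac : ∀ l ∈ E, (1 - (((tUnit r l)⁻¹ : (LaurentRing r)ˣ) : LaurentRing r))
        = (-(((tUnit r l)⁻¹ : (LaurentRing r)ˣ) : LaurentRing r)) * (1 - (tUnit r l : LaurentRing r)) := by
      intro l _
      have h := Units.inv_mul (tUnit r l)
      linear_combination -h
    rw [Finset.prod_congr rfl hfac, Finset.prod_mul_distrib, ← hX]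
    congr 1
    have : ∀ l ∈ E, (-(((tUnit r l)⁻¹ : (LaurentRing r)ˣ) : LaurentRing r))
        = (-1) * (((tUnit r l)⁻¹ : (LaurentRing r)ˣ) : LaurentRing r) := by intros; ring
    rw [Finset.prod_congr rfl this, Finset.prod_mul_distrib, Finset.prod_const, hcard]
    have hco : (∏ l ∈ E, ((((tUnit r l)⁻¹ : (LaurentRing r)ˣ)) : LaurentRing r)) = (tUnit r j : LaurentRing r) := by
      rw [← Units.coe_prod, hsprod]
    rw [hco]; ring
  have hRHS : (∏ l, (1 - (tUnit r l : LaurentRing r))) = (1 - (tUnit r j : LaurentRing r)) * X := by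
    rw [hX, hE]
    exact (Finset.mul_prod_erase _ _ (Finset.mem_univ j)).symm
  rw [hbar, hmain, hRHS]; ring

/-- **The vertex term is a square root of the virtual tangent space.** In the Laurent
polynomial ring `A`, with `bar` the automorphism inverting all variables,
`t₄ = (t₁t₂t₃)⁻¹`, arbitrary `Q₁, …, Q₄, K₁, …, K₄ ∈ A`, `Q = ∑ Qᵢ`, `K = ∑ Kᵢ`,
`P = ∏ₗ (1 − t_l)` and `Pbar_j = ∏_{l ≠ j} (1 − t_l⁻¹)`, the vertex term
`v = bar(K)·Q − ∑ⱼ Kⱼtⱼ·bar(Q) − ∑ⱼ Pbar_j·Qⱼ·bar(Qⱼ) − ∑_{i<j} Pbar_j·(Qⱼ·bar(Qᵢ) + Qᵢ·bar(Qⱼ))`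
satisfies `v + bar(v) = T`, where
`T = bar(K)·Q + K·bar(Q) − P·Q·bar(Q) − ∑ᵢ Kᵢtᵢ·bar(Q) − ∑ᵢ bar(Kᵢ)tᵢ⁻¹·Q`. -/
theorem vertex_add_bar_vertex (r : ℕ) (Q K : Fin 4 → LaurentRing r)
    (Qs Ks P v T : LaurentRing r) (Pb : Fin 4 → LaurentRing r)
    (hQs : Qs = ∑ i, Q i) (hKs : Ks = ∑ i, K i)
    (hP : P = ∏ l, (1 - (tUnit r l : LaurentRing r)))
    (hPb : ∀ j, Pb j = ∏ l ∈ Finset.univ.erase j, (1 - ((tUnit r l)⁻¹ : (LaurentRing r)ˣ) : LaurentRing r))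
    (hv : v = bar r Ks * Qs - (∑ j, K j * (tUnit r j : LaurentRing r) * bar r Qs)
        - (∑ j, Pb j * Q j * bar r (Q j))
        - ∑ j, ∑ i ∈ Finset.univ.filter (· < j),
            Pb j * (Q j * bar r (Q i) + Q i * bar r (Q j)))
    (hT : T = bar r Ks * Qs + Ks * bar r Qs - P * Qs * bar r Qs
        - (∑ i, K i * (tUnit r i : LaurentRing r) * bar r Qs)
        - ∑ i, bar r (K i) * (((tUnit r i)⁻¹ : (LaurentRing r)ˣ) : LaurentRing r) * Qs) :
    v + bar r v = T := by
  have key : ∀ j, Pb j + bar r (Pb j) = P := fun j => by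
    rw [hPb j, hP]; exact key_lemma r j
  have hf0 : Finset.univ.filter (· < (0 : Fin 4)) = ∅ := by decide
  have hf1 : Finset.univ.filter (· < (1 : Fin 4)) = {0} := by decide
  have hf2 : Finset.univ.filter (· < (2 : Fin 4)) = {0, 1} := by decide
  have hf3 : Finset.univ.filter (· < (3 : Fin 4)) = {0, 1, 2} := by decide
  subst hQs hKs hv hT
  have e2 : ∀ f : Fin 4 → LaurentRing r, (∑ x ∈ ({0, 1} : Finset (Fin 4)), f x) = f 0 + f 1 :=
    fun f => Finset.sum_pair (by decide)
  have e3 : ∀ f : Fin 4 → LaurentRing r,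
      (∑ x ∈ ({0, 1, 2} : Finset (Fin 4)), f x) = f 0 + (f 1 + f 2) := fun f => by
    rw [show ({0, 1, 2} : Finset (Fin 4)) = insert 0 {1, 2} from rfl,
      Finset.sum_insert (by decide), Finset.sum_pair (by decide)]
  simp only [Fin.sum_univ_four, hf0, hf1, hf2, hf3, Finset.sum_empty, Finset.sum_singleton, e2, e3]
  simp only [map_add, map_sub, map_mul, map_one, map_zero, bar_bar, bar_tUnit, bar_tUnit_inv]
  linear_combination -(key 0) * (Q 0 * bar r (Q 0))
    - (key 1) * (Q 1 * bar r (Q 1) + Q 1 * bar r (Q 0) + Q 0 * bar r (Q 1))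
    - (key 2) * (Q 2 * bar r (Q 2) + Q 2 * bar r (Q 0) + Q 0 * bar r (Q 2)
        + Q 2 * bar r (Q 1) + Q 1 * bar r (Q 2))
    - (key 3) * (Q 3 * bar r (Q 3) + Q 3 * bar r (Q 0) + Q 0 * bar r (Q 3)
        + Q 3 * bar r (Q 1) + Q 1 * bar r (Q 3) + Q 3 * bar r (Q 2) + Q 2 * bar r (Q 3))

end
end

section
/- Let r ≥ 1, let x₁, …, x_r and q be positive real numbers, write X := ∏_{i=1}^{r} x_i, define [u] := √u − 1/√u for positive real u, and set q_i := q · ∏_{j=1}^{r} x_j^{sgn(i−j)/2} (real powers; sgn(m) = 1 if m > 0, −1 if m < 0, 0 if m = 0). Assume that for each i one has x_i^{1/2}·q_i ≠ 1 and x_i^{1/2} ≠ q_i, and that X^{1/2}·q ≠ 1 and X^{1/2} ≠ q. Then ∑_{i=1}^{r} [x_i] / ([x_i^{1/2}·q_i] · [x_i^{1/2}·q_i⁻¹]) = [X] / ([X^{1/2}·q] · [X^{1/2}·q⁻¹]). -/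
open Real Finset

/-- The bracket `[u] := √u − 1/√u`. -/
noncomputable def br (u : ℝ) : ℝ := Real.sqrt u - 1 / Real.sqrt u

/-- Auxiliary "cotangent-like" function. -/
noncomputable def phiAux (u : ℝ) : ℝ := (u + 1) / (u - 1)

lemma br_eq {A : ℝ} (hA : 0 < A) : br A = (A - 1) / Real.sqrt A := by
  have hs : Real.sqrt A ≠ 0 := by positivity
  rw [br, eq_div_iff hs, sub_mul, one_div, inv_mul_cancel₀ hs, Real.mul_self_sqrt hA.le]

lemma phiAux_inv {B : ℝ} (hB : B ≠ 0) (hB1 : B ≠ 1) : phiAux B⁻¹ = - phiAux B := by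
  have h1 : B - 1 ≠ 0 := sub_ne_zero.2 hB1
  have h2 : 1 - B ≠ 0 := fun h => hB1 (by linarith)
  unfold phiAux
  field_simp
  ring

lemma key_lemma_s6 {A B : ℝ} (hA : 0 < A) (hB : 0 < B) (hA1 : A ≠ 1) (hB1 : B ≠ 1) :
    br (A * B) / (br A * br B) = (phiAux A + phiAux B) / 2 := by
  have hsA : Real.sqrt A ≠ 0 := by positivity
  have hsB : Real.sqrt B ≠ 0 := by positivity
  have hA1' : A - 1 ≠ 0 := sub_ne_zero.2 hA1
  have hB1' : B - 1 ≠ 0 := sub_ne_zero.2 hB1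
  rw [br_eq hA, br_eq hB, br_eq (by positivity : (0:ℝ) < A * B),
    Real.sqrt_mul hA.le, phiAux, phiAux]
  field_simp
  ring

lemma term_eq {x w : ℝ} (hx : 0 < x) (hw : 0 < w)
    (h1 : Real.sqrt x * w ≠ 1) (h2 : Real.sqrt x ≠ w) :
    br x / (br (Real.sqrt x * w) * br (Real.sqrt x / w)) =
      (phiAux (Real.sqrt x * w) - phiAux (w / Real.sqrt x)) / 2 := by
  have hs : 0 < Real.sqrt x := Real.sqrt_pos.2 hx
  have hA : 0 < Real.sqrt x * w := by positivity
  have hB : 0 < Real.sqrt x / w := by positivity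
  have hB1 : Real.sqrt x / w ≠ 1 := by
    intro heq
    apply h2
    field_simp at heq
    exact heq
  have hAB : (Real.sqrt x * w) * (Real.sqrt x / w) = x := by
    rw [show (Real.sqrt x * w) * (Real.sqrt x / w)
        = Real.sqrt x * Real.sqrt x * (w / w) by ring,
      div_self hw.ne', mul_one, Real.mul_self_sqrt hx.le]
  have hk := key_lemma_s6 hA hB h1 hB1
  rw [hAB] at hk
  rw [hk]
  have hinv : phiAux (w / Real.sqrt x) = - phiAux (Real.sqrt x / w) := by
    rw [show w / Real.sqrt x = (Real.sqrt x / w)⁻¹ by field_simp]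
    exact phiAux_inv hB.ne' hB1
  rw [hinv]
  ring

/-- **Key rational-function identity.** For `r ≥ 1`, positive reals `x₁, …, x_r` and `q`,
with `X = ∏ x_i` and `q_i = q · ∏_j x_j^{sgn(i−j)/2}`, under the stated nondegeneracy
assumptions,
`∑_{i=1}^{r} [x_i] / ([x_i^{1/2} q_i]·[x_i^{1/2} q_i⁻¹]) = [X] / ([X^{1/2} q]·[X^{1/2} q⁻¹])`. -/
theorem bracket_sum_identity (r : ℕ) (hr : 1 ≤ r) (x : Fin r → ℝ) (q : ℝ)
    (hx : ∀ i, 0 < x i) (hq : 0 < q)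
    (X : ℝ) (hX : X = ∏ i, x i)
    (qi : Fin r → ℝ)
    (hqi : ∀ i, qi i = q * ∏ j, x j ^ ((Int.sign ((i : ℤ) - (j : ℤ)) : ℝ) / 2))
    (h1 : ∀ i, Real.sqrt (x i) * qi i ≠ 1)
    (h2 : ∀ i, Real.sqrt (x i) ≠ qi i)
    (h3 : Real.sqrt X * q ≠ 1)
    (h4 : Real.sqrt X ≠ q) :
    ∑ i, br (x i) / (br (Real.sqrt (x i) * qi i) * br (Real.sqrt (x i) / qi i)) =
      br X / (br (Real.sqrt X * q) * br (Real.sqrt X / q)) := by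
  -- the telescoping sequence
  set G : ℕ → ℝ := fun k =>
    q * ∏ j : Fin r, (if (j : ℕ) < k then Real.sqrt (x j) else (Real.sqrt (x j))⁻¹) with hG
  -- rewrite qi in "if-then-else" form
  have hqi' : ∀ i : Fin r, qi i =
      q * ∏ j : Fin r, (if (j : ℕ) < (i : ℕ) then Real.sqrt (x j)
        else if (j : ℕ) = (i : ℕ) then 1 else (Real.sqrt (x j))⁻¹) := by
    intro i
    rw [hqi i]
    congr 1
    refine Finset.prod_congr rfl fun j _ => ?_
    rcases lt_trichotomy (j : ℕ) (i : ℕ) with h | h | h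
    · have hs : Int.sign ((i : ℤ) - (j : ℤ)) = 1 := by
        apply Int.sign_eq_one_of_pos; omega
      rw [hs, if_pos h]
      push_cast
      rw [← Real.sqrt_eq_rpow]
    · have hs : Int.sign ((i : ℤ) - (j : ℤ)) = 0 := by
        rw [Int.sign_eq_zero_iff_zero]; omega
      rw [hs, if_neg (by omega), if_pos h]
      norm_num
    · have hs : Int.sign ((i : ℤ) - (j : ℤ)) = -1 := by
        apply Int.sign_eq_neg_one_of_neg; omega
      rw [hs, if_neg (by omega), if_neg (by omega)]
      push_cast
      rw [show (-1 : ℝ) / 2 = -(1/2) by norm_num, Real.rpow_neg (hx j).le,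
        ← Real.sqrt_eq_rpow]
  have hqipos : ∀ i, 0 < qi i := by
    intro i
    rw [hqi' i]
    apply mul_pos hq
    apply Finset.prod_pos
    intro j _
    have := Real.sqrt_pos.2 (hx j)
    split_ifs <;> positivity
  -- identification with G
  have hGA : ∀ i : Fin r, Real.sqrt (x i) * qi i = G ((i : ℕ) + 1) := by
    intro i
    rw [hqi' i, hG]
    simp only
    rw [Finset.prod_eq_mul_prod_sdiff_singleton_of_mem (Finset.mem_univ i),
      Finset.prod_eq_mul_prod_sdiff_singleton_of_mem (Finset.mem_univ i)
        (fun j => if (j : ℕ) < (i : ℕ) + 1 then Real.sqrt (x j) else (Real.sqrt (x j))⁻¹)]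
    rw [if_neg (lt_irrefl _), if_pos (by omega : (i : ℕ) = (i : ℕ)),
      if_pos (by omega : (i : ℕ) < (i : ℕ) + 1)]
    have hrest : ∀ j ∈ Finset.univ \ {i},
        (if (j : ℕ) < (i : ℕ) then Real.sqrt (x j)
          else if (j : ℕ) = (i : ℕ) then 1 else (Real.sqrt (x j))⁻¹) =
        (if (j : ℕ) < (i : ℕ) + 1 then Real.sqrt (x j) else (Real.sqrt (x j))⁻¹) := by
      intro j hj
      simp only [Finset.mem_sdiff, Finset.mem_singleton] at hj
      have hne : (j : ℕ) ≠ (i : ℕ) := fun h => hj.2 (Fin.ext h)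
      rcases lt_or_gt_of_ne hne with h | h
      · rw [if_pos h, if_pos (by omega)]
      · rw [if_neg (by omega), if_neg hne, if_neg (by omega)]
    rw [Finset.prod_congr rfl hrest]
    ring
  have hGB : ∀ i : Fin r, qi i / Real.sqrt (x i) = G (i : ℕ) := by
    intro i
    have hs : Real.sqrt (x i) ≠ 0 := (Real.sqrt_pos.2 (hx i)).ne'
    rw [hqi' i, hG]
    simp only
    rw [Finset.prod_eq_mul_prod_sdiff_singleton_of_mem (Finset.mem_univ i),
      Finset.prod_eq_mul_prod_sdiff_singleton_of_mem (Finset.mem_univ i)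
        (fun j => if (j : ℕ) < (i : ℕ) then Real.sqrt (x j) else (Real.sqrt (x j))⁻¹)]
    rw [if_neg (lt_irrefl _), if_pos (by omega : (i : ℕ) = (i : ℕ)),
      if_neg (lt_irrefl _)]
    have hrest : ∀ j ∈ Finset.univ \ {i},
        (if (j : ℕ) < (i : ℕ) then Real.sqrt (x j)
          else if (j : ℕ) = (i : ℕ) then 1 else (Real.sqrt (x j))⁻¹) =
        (if (j : ℕ) < (i : ℕ) then Real.sqrt (x j) else (Real.sqrt (x j))⁻¹) := by
      intro j hj
      simp only [Finset.mem_sdiff, Finset.mem_singleton] at hj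
      have hne : (j : ℕ) ≠ (i : ℕ) := fun h => hj.2 (Fin.ext h)
      rcases lt_or_gt_of_ne hne with h | h
      · rw [if_pos h, if_pos h]
      · rw [if_neg (by omega), if_neg hne, if_neg (by omega)]
    rw [Finset.prod_congr rfl hrest]
    field_simp
  -- positivity of X and product-of-sqrt fact
  have hXpos : 0 < X := by
    rw [hX]; exact Finset.prod_pos fun i _ => hx i
  have hsqrtX : Real.sqrt X = ∏ j, Real.sqrt (x j) := by
    rw [hX]
    rw [show (∏ i, x i) = (∏ j, Real.sqrt (x j)) ^ 2 by
      rw [← Finset.prod_pow]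
      exact Finset.prod_congr rfl fun j _ => (Real.sq_sqrt (hx j).le).symm]
    exact Real.sqrt_sq (Finset.prod_nonneg fun j _ => Real.sqrt_nonneg _)
  -- endpoints of telescoping
  have hGr : G r = Real.sqrt X * q := by
    rw [hG]
    simp only
    rw [Finset.prod_congr rfl (fun (j : Fin r) (_ : j ∈ (Finset.univ : Finset (Fin r))) => if_pos j.isLt)]
    rw [hsqrtX]; ring
  have hG0 : G 0 = q / Real.sqrt X := by
    rw [hG]
    simp only
    rw [Finset.prod_congr rfl (fun (j : Fin r) (_ : j ∈ (Finset.univ : Finset (Fin r))) =>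
      if_neg (by omega : ¬ (j : ℕ) < 0))]
    rw [Finset.prod_inv_distrib, hsqrtX]
    field_simp
  -- rewrite each term and telescope
  have hterm : ∀ i : Fin r,
      br (x i) / (br (Real.sqrt (x i) * qi i) * br (Real.sqrt (x i) / qi i)) =
        (phiAux (G ((i : ℕ) + 1)) - phiAux (G (i : ℕ))) / 2 := by
    intro i
    rw [term_eq (hx i) (hqipos i) (h1 i) (h2 i), hGA i, hGB i]
  calc ∑ i, br (x i) / (br (Real.sqrt (x i) * qi i) * br (Real.sqrt (x i) / qi i))
      = ∑ i : Fin r, (phiAux (G ((i : ℕ) + 1)) - phiAux (G (i : ℕ))) / 2 :=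
        Finset.sum_congr rfl fun i _ => hterm i
    _ = (∑ i ∈ Finset.range r, (phiAux (G (i + 1)) - phiAux (G i))) / 2 := by
        rw [← Finset.sum_div, Fin.sum_univ_eq_sum_range
          (fun i => phiAux (G (i + 1)) - phiAux (G i))]
    _ = (phiAux (G r) - phiAux (G 0)) / 2 := by
        rw [Finset.sum_range_sub (fun i => phiAux (G i))]
    _ = br X / (br (Real.sqrt X * q) * br (Real.sqrt X / q)) := by
        rw [term_eq hXpos hq h3 h4, hGr, hG0]
end

section
/- Let a, m, z, q be positive real numbers, define [u] := √u − 1/√u for positive real u, and set p := q·√a/√z, q₁ := q/(√m·√z), q₃ := q·√a·√m. Assume all six quantities √m·p, √m/p, √a·q₁, √a/q₁, √z·q₃, √z/q₃ as well as √(amz)·q and √(amz)/q are different from 1. Then [m]/([√m·p]·[√m·p⁻¹]) + [a]/([√a·q₁]·[√a·q₁⁻¹]) + [z]/([√z·q₃]·[√z·q₃⁻¹]) = [amz]/([√(amz)·q]·[√(amz)·q⁻¹]), where for positive real u, [u·p⁻¹] means the bracket of u/p. -/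
open Real

lemma key_alg (sx sy : ℝ) (hsx : 0 < sx) (hsy : 0 < sy) :
    (sx * sy - 1 / (sx * sy)) * (sx / sy - 1 / (sx / sy)) =
      (sx ^ 2 + 1 / sx ^ 2) - (sy ^ 2 + 1 / sy ^ 2) := by
  field_simp
  ring

lemma br_mul_div (x y : ℝ) (hx : 0 < x) (hy : 0 < y) :
    br (x * y) * br (x / y) = (x + 1 / x) - (y + 1 / y) := by
  unfold br
  rw [Real.sqrt_mul hx.le, Real.sqrt_div' x hy.le]
  rw [key_alg _ _ (Real.sqrt_pos.mpr hx) (Real.sqrt_pos.mpr hy),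
    Real.sq_sqrt hx.le, Real.sq_sqrt hy.le]

lemma denom_ne (x y : ℝ) (hx : 0 < x) (hy : 0 < y) (h1 : x * y ≠ 1) (h2 : x / y ≠ 1) :
    (x + 1 / x) - (y + 1 / y) ≠ 0 := by
  have hx0 : x ≠ 0 := hx.ne'
  have hy0 : y ≠ 0 := hy.ne'
  have hxy : x ≠ y := fun h => h2 (by rw [h]; field_simp)
  have : (x + 1 / x) - (y + 1 / y) = (x - y) * (x * y - 1) / (x * y) := by
    field_simp; ring
  rw [this]
  exact div_ne_zero (mul_ne_zero (sub_ne_zero.mpr hxy) (sub_ne_zero.mpr h1))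
    (mul_ne_zero hx0 hy0)

/-- **Three-term bracket identity closing the induction.** For positive reals `a, m, z, q`,
with `p = q√a/√z`, `q₁ = q/(√m√z)`, `q₃ = q·√a·√m`, under the stated nondegeneracy
assumptions,
`[m]/([√m·p][√m·p⁻¹]) + [a]/([√a·q₁][√a·q₁⁻¹]) + [z]/([√z·q₃][√z·q₃⁻¹])
  = [amz]/([√(amz)·q][√(amz)·q⁻¹])`. -/
theorem bracket_three_term_identity (a m z q : ℝ)
    (ha : 0 < a) (hm : 0 < m) (hz : 0 < z) (hq : 0 < q)
    (p q₁ q₃ : ℝ)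
    (hp : p = q * Real.sqrt a / Real.sqrt z)
    (hq₁ : q₁ = q / (Real.sqrt m * Real.sqrt z))
    (hq₃ : q₃ = q * Real.sqrt a * Real.sqrt m)
    (h1 : Real.sqrt m * p ≠ 1) (h2 : Real.sqrt m / p ≠ 1)
    (h3 : Real.sqrt a * q₁ ≠ 1) (h4 : Real.sqrt a / q₁ ≠ 1)
    (h5 : Real.sqrt z * q₃ ≠ 1) (h6 : Real.sqrt z / q₃ ≠ 1)
    (h7 : Real.sqrt (a * m * z) * q ≠ 1) (h8 : Real.sqrt (a * m * z) / q ≠ 1) :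
    br m / (br (Real.sqrt m * p) * br (Real.sqrt m / p)) +
      br a / (br (Real.sqrt a * q₁) * br (Real.sqrt a / q₁)) +
      br z / (br (Real.sqrt z * q₃) * br (Real.sqrt z / q₃)) =
    br (a * m * z) / (br (Real.sqrt (a * m * z) * q) * br (Real.sqrt (a * m * z) / q)) := by
  have hA : 0 < Real.sqrt a := Real.sqrt_pos.mpr ha
  have hM : 0 < Real.sqrt m := Real.sqrt_pos.mpr hm
  have hZ : 0 < Real.sqrt z := Real.sqrt_pos.mpr hz
  set A := Real.sqrt a with hAdef
  set M := Real.sqrt m with hMdef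
  set Z := Real.sqrt z with hZdef
  have hp0 : 0 < p := by rw [hp]; positivity
  have hq10 : 0 < q₁ := by rw [hq₁]; positivity
  have hq30 : 0 < q₃ := by rw [hq₃]; positivity
  have hamz : Real.sqrt (a * m * z) = A * M * Z := by
    rw [Real.sqrt_mul (by positivity), Real.sqrt_mul ha.le]
  rw [hamz] at h7 h8 ⊢
  rw [br_mul_div M p hM hp0, br_mul_div A q₁ hA hq10, br_mul_div Z q₃ hZ hq30,
    br_mul_div (A * M * Z) q (by positivity) hq]
  have e1 : br m = M - 1 / M := by
    unfold br; rfl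
  have e2 : br a = A - 1 / A := by
    unfold br; rfl
  have e3 : br z = Z - 1 / Z := by
    unfold br; rfl
  have e4 : br (a * m * z) = A * M * Z - 1 / (A * M * Z) := by
    unfold br; rw [hamz]
  rw [e1, e2, e3, e4]
  have d1 : (M + 1 / M) - (p + 1 / p) ≠ 0 := denom_ne M p hM hp0 h1 h2
  have d2 : (A + 1 / A) - (q₁ + 1 / q₁) ≠ 0 := denom_ne A q₁ hA hq10 h3 h4
  have d3 : (Z + 1 / Z) - (q₃ + 1 / q₃) ≠ 0 := denom_ne Z q₃ hZ hq30 h5 h6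
  have d4 : (A * M * Z + 1 / (A * M * Z)) - (q + 1 / q) ≠ 0 :=
    denom_ne (A * M * Z) q (by positivity) hq h7 h8
  rw [hp] at d1 ⊢
  rw [hq₁] at d2 ⊢
  rw [hq₃] at d3 ⊢
  have hA0 : A ≠ 0 := hA.ne'
  have hM0 : M ≠ 0 := hM.ne'
  have hZ0 : Z ≠ 0 := hZ.ne'
  have hq0 : q ≠ 0 := hq.ne'
  field_simp at d1 d2 d3 d4 ⊢
  have n1 := (div_ne_zero_iff.mp d1).1
  have n2 := (div_ne_zero_iff.mp d2).1
  have n3 := (div_ne_zero_iff.mp d3).1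
  have n4 := (div_ne_zero_iff.mp d4).1
  rw [div_add_div _ _ n1 n2, mul_div_assoc', div_add_div _ _ (mul_ne_zero n1 n2) n3,
    div_eq_div_iff (mul_ne_zero (mul_ne_zero n1 n2) n3) n4]
  ring
end

section
/- Let κ₁, κ₂, κ₃, κ₄ and q be positive real numbers, let r₁, r₂, r₃, r₄ ∈ ℕ, define [u] := √u − 1/√u for positive real u, set κ := ∏_{i=1}^{4} κ_i^{r_i}, and for i ∈ {1,2,3,4}, 1 ≤ l ≤ r_i set q_{il} := q · κ_i^{(−r_i−1)/2 + l} · ∏_{j=1}^{4} κ_j^{r_j·sgn(i−j)/2} (real powers; sgn(m) = 1 if m > 0, −1 if m < 0, 0 if m = 0). Assume κ_i^{1/2}·q_{il} ≠ 1 and κ_i^{1/2} ≠ q_{il} for all i, l, and κ^{1/2}·q ≠ 1 and κ^{1/2} ≠ q. Then ∑_{i=1}^{4} ∑_{l=1}^{r_i} [κ_i] / ([κ_i^{1/2}·q_{il}] · [κ_i^{1/2}·q_{il}⁻¹]) = [κ] / ([κ^{1/2}·q] · [κ^{1/2}·q⁻¹]). -/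
open Real

noncomputable def hh (x : ℝ) : ℝ := (Real.sqrt x + 1 / Real.sqrt x) / (Real.sqrt x - 1 / Real.sqrt x)

lemma key (a b : ℝ) (ha : 0 < a) (hb : 0 < b)
    (h1 : Real.sqrt a * b ≠ 1) (h2 : Real.sqrt a ≠ b) :
    br a / (br (Real.sqrt a * b) * br (Real.sqrt a / b))
      = (hh (Real.sqrt a * b) - hh (b / Real.sqrt a)) / 2 := by
  have hsa : 0 < Real.sqrt a := Real.sqrt_pos.2 ha
  set s := Real.sqrt (Real.sqrt a * b) with hs_def
  set t := Real.sqrt (Real.sqrt a / b) with ht_def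
  have hs : 0 < s := Real.sqrt_pos.2 (by positivity)
  have ht : 0 < t := Real.sqrt_pos.2 (by positivity)
  have hs2 : s * s = Real.sqrt a * b := Real.mul_self_sqrt (by positivity)
  have ht2 : t * t = Real.sqrt a / b := Real.mul_self_sqrt (by positivity)
  have hst : s * t = Real.sqrt a := by
    rw [hs_def, ht_def, ← Real.sqrt_mul (by positivity)]
    rw [show Real.sqrt a * b * (Real.sqrt a / b) = a by
      field_simp
      rw [Real.sq_sqrt ha.le]]
  have hs1 : s ≠ 1 := fun h => h1 (by rw [← hs2, h, one_mul])
  have ht1 : t ≠ 1 := by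
    intro h
    apply h2
    have : Real.sqrt a / b = 1 := by rw [← ht2, h, one_mul]
    field_simp at this; exact this
  have hds : s - 1/s ≠ 0 := by
    intro h
    apply hs1
    have : s * s = 1 := by field_simp at h; nlinarith
    nlinarith
  have hdt : t - 1/t ≠ 0 := by
    intro h
    apply ht1
    have : t * t = 1 := by field_simp at h; nlinarith
    nlinarith
  have hbq : b / Real.sqrt a = (Real.sqrt a / b)⁻¹ := by rw [inv_div]
  rw [br, br, br, hh, hh, hbq, Real.sqrt_inv, ← hs_def, ← ht_def, ← hst]
  have hst0 : s * t ≠ 0 := by positivity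
  have A : (-1 + s^2) ≠ 0 := by
    intro h; apply hs1; nlinarith
  have B : (1 - t^2) ≠ 0 := by
    intro h; apply ht1; nlinarith
  have C : (1 - s^2 + (s^2*t^2 - t^2)) ≠ 0 := by
    intro h
    have := mul_ne_zero A B
    apply this; nlinarith
  field_simp
  have A' : s*s - 1 ≠ 0 := by intro h; apply hs1; nlinarith
  have B' : t*t - 1 ≠ 0 := by intro h; apply ht1; nlinarith
  have B'' : 1 - t*t ≠ 0 := by intro h; apply ht1; nlinarith
  field_simp
  have A2 : s^2 - 1 ≠ 0 := by intro h; apply hs1; nlinarith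
  have B2 : t^2 - 1 ≠ 0 := by intro h; apply ht1; nlinarith
  field_simp
  ring

lemma block (a C : ℝ) (ha : 0 < a) (hC : 0 < C) (Q : ℕ → ℝ)
    (hQl : ∀ l, Q l = C * a ^ (l : ℝ)) (r : ℕ)
    (h1 : ∀ l ∈ Finset.Icc 1 r, Real.sqrt a * Q l ≠ 1)
    (h2 : ∀ l ∈ Finset.Icc 1 r, Real.sqrt a ≠ Q l) :
    ∑ l ∈ Finset.Icc 1 r, br a / (br (Real.sqrt a * Q l) * br (Real.sqrt a / Q l))
      = (hh (C * a ^ ((r : ℝ) + 1/2)) - hh (C * a ^ ((1:ℝ)/2))) / 2 := by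
  induction r with
  | zero => simp
  | succ n ih =>
    have hsub : Finset.Icc 1 n ⊆ Finset.Icc 1 (n+1) := by
      apply Finset.Icc_subset_Icc_right; omega
    rw [Finset.sum_Icc_succ_top (by omega)]
    rw [ih (fun l hl => h1 l (hsub hl)) (fun l hl => h2 l (hsub hl))]
    have hQpos : 0 < Q (n+1) := by rw [hQl]; positivity
    have e0 := key a (Q (n+1)) ha hQpos
      (h1 (n+1) (by simp)) (h2 (n+1) (by simp))
    rw [e0]
    have e1 : Real.sqrt a * Q (n+1) = C * a ^ (((n+1 : ℕ) : ℝ) + 1/2) := by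
      rw [hQl, Real.sqrt_eq_rpow, ← mul_assoc, mul_comm (a ^ ((1:ℝ)/2)) C, mul_assoc,
        ← Real.rpow_add ha, add_comm]
    have e2 : Q (n+1) / Real.sqrt a = C * a ^ ((n : ℝ) + 1/2) := by
      rw [hQl, Real.sqrt_eq_rpow, div_eq_mul_inv, ← Real.rpow_neg ha.le, mul_assoc,
        ← Real.rpow_add ha]
      congr 1
      push_cast
      ring
    rw [e1, e2]
    ring

lemma log_eq_imp {x y : ℝ} (hx : 0 < x) (hy : 0 < y) (h : Real.log x = Real.log y) : x = y := by
  rw [← Real.exp_log hx, ← Real.exp_log hy, h]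

/-- **Specialised bracket identity.** For positive reals `κ₁, …, κ₄, q` and naturals
`r₁, …, r₄`, with `κ = ∏ κ_i^{r_i}` and
`q_{il} = q · κ_i^{(−r_i−1)/2+l} · ∏_j κ_j^{r_j·sgn(i−j)/2}` (for `1 ≤ l ≤ r_i`),
under the stated nondegeneracy assumptions,
`∑_{i=1}^{4} ∑_{l=1}^{r_i} [κ_i]/([κ_i^{1/2} q_{il}][κ_i^{1/2} q_{il}⁻¹])
  = [κ]/([κ^{1/2} q][κ^{1/2} q⁻¹])`. -/
theorem bracket_sum_identity_kappa (κ : Fin 4 → ℝ) (q : ℝ)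
    (hκ : ∀ i, 0 < κ i) (hq : 0 < q) (r : Fin 4 → ℕ)
    (K : ℝ) (hK : K = ∏ i, κ i ^ (r i : ℝ))
    (Q : Fin 4 → ℕ → ℝ)
    (hQ : ∀ i l, Q i l =
      q * κ i ^ ((-(r i : ℝ) - 1) / 2 + (l : ℝ)) *
        ∏ j : Fin 4, κ j ^ ((r j : ℝ) * (Int.sign ((i : ℤ) - (j : ℤ)) : ℝ) / 2))
    (h1 : ∀ i : Fin 4, ∀ l ∈ Finset.Icc 1 (r i), Real.sqrt (κ i) * Q i l ≠ 1)
    (h2 : ∀ i : Fin 4, ∀ l ∈ Finset.Icc 1 (r i), Real.sqrt (κ i) ≠ Q i l)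
    (h3 : Real.sqrt K * q ≠ 1)
    (h4 : Real.sqrt K ≠ q) :
    (∑ i : Fin 4, ∑ l ∈ Finset.Icc 1 (r i),
        br (κ i) / (br (Real.sqrt (κ i) * Q i l) * br (Real.sqrt (κ i) / Q i l))) =
      br K / (br (Real.sqrt K * q) * br (Real.sqrt K / q)) := by
  have hK0 : 0 < K := by
    rw [hK]; exact Finset.prod_pos fun i _ => Real.rpow_pos_of_pos (hκ i) _
  set P : Fin 4 → ℝ := fun i =>
    ∏ j : Fin 4, κ j ^ ((r j : ℝ) * (Int.sign ((i : ℤ) - (j : ℤ)) : ℝ) / 2) with hP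
  set C : Fin 4 → ℝ := fun i => q * κ i ^ ((-(r i : ℝ) - 1) / 2) * P i with hCdef
  have hPpos : ∀ i, 0 < P i := fun i =>
    Finset.prod_pos fun j _ => Real.rpow_pos_of_pos (hκ j) _
  have hCpos : ∀ i, 0 < C i := fun i =>
    mul_pos (mul_pos hq (Real.rpow_pos_of_pos (hκ i) _)) (hPpos i)
  have hQ' : ∀ i l, Q i l = C i * κ i ^ (l : ℝ) := by
    intro i l
    rw [hQ, Real.rpow_add (hκ i), hCdef]
    ring
  have hblock : ∀ i : Fin 4,
      ∑ l ∈ Finset.Icc 1 (r i),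
        br (κ i) / (br (Real.sqrt (κ i) * Q i l) * br (Real.sqrt (κ i) / Q i l))
      = (hh (C i * κ i ^ ((r i : ℝ) + 1/2)) - hh (C i * κ i ^ ((1:ℝ)/2))) / 2 :=
    fun i => block (κ i) (C i) (hκ i) (hCpos i) (Q i) (hQ' i) (r i) (h1 i) (h2 i)
  rw [key K q hK0 hq h3 h4]
  simp only [hblock]
  rw [Fin.sum_univ_four]
  -- log of a generic endpoint
  have hlog : ∀ (i : Fin 4) (e : ℝ), Real.log (C i * κ i ^ e) =
      Real.log q + ((-(r i : ℝ) - 1) / 2) * Real.log (κ i)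
        + (∑ j : Fin 4, (r j : ℝ) * (Int.sign ((i : ℤ) - (j : ℤ)) : ℝ) / 2 * Real.log (κ j))
        + e * Real.log (κ i) := by
    intro i e
    have hki : 0 < κ i := hκ i
    have hx1 : q * κ i ^ ((-(r i : ℝ) - 1) / 2) ≠ 0 := by positivity
    have hx2 : P i ≠ 0 := ne_of_gt (hPpos i)
    have hx3 : κ i ^ e ≠ 0 := by positivity
    rw [hCdef]
    rw [Real.log_mul (mul_ne_zero hx1 hx2) hx3, Real.log_mul hx1 hx2,
        Real.log_mul (ne_of_gt hq) (by positivity), Real.log_rpow (hκ i), Real.log_rpow (hκ i),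
        hP, Real.log_prod (fun j _ => ne_of_gt (Real.rpow_pos_of_pos (hκ j) _))]
    simp only [Real.log_rpow (hκ _)]
    try ring
  have hlogK : Real.log K = ∑ j : Fin 4, (r j : ℝ) * Real.log (κ j) := by
    rw [hK, Real.log_prod (fun j _ => ne_of_gt (Real.rpow_pos_of_pos (hκ j) _))]
    simp only [Real.log_rpow (hκ _)]
  have hT0B1 : C 0 * κ 0 ^ ((r 0 : ℝ) + 1/2) = C 1 * κ 1 ^ ((1:ℝ)/2) := by
    apply log_eq_imp (by have := hCpos 0; have := hκ 0; positivity)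
      (by have := hCpos 1; have := hκ 1; positivity)
    rw [hlog, hlog, Fin.sum_univ_four, Fin.sum_univ_four]
    norm_num [show ((0:Fin 4):ℤ) = 0 from rfl, show ((1:Fin 4):ℤ) = 1 from rfl,
      show ((2:Fin 4):ℤ) = 2 from rfl, show ((3:Fin 4):ℤ) = 3 from rfl,
      show Int.sign (-3) = -1 from rfl, show Int.sign (-2) = -1 from rfl,
      show Int.sign (-1) = -1 from rfl, show Int.sign (1:ℤ) = 1 from rfl,
      show Int.sign (2:ℤ) = 1 from rfl, show Int.sign (3:ℤ) = 1 from rfl]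
    try ring
  have hT1B2 : C 1 * κ 1 ^ ((r 1 : ℝ) + 1/2) = C 2 * κ 2 ^ ((1:ℝ)/2) := by
    apply log_eq_imp (by have := hCpos 1; have := hκ 1; positivity)
      (by have := hCpos 2; have := hκ 2; positivity)
    rw [hlog, hlog, Fin.sum_univ_four, Fin.sum_univ_four]
    norm_num [show ((0:Fin 4):ℤ) = 0 from rfl, show ((1:Fin 4):ℤ) = 1 from rfl,
      show ((2:Fin 4):ℤ) = 2 from rfl, show ((3:Fin 4):ℤ) = 3 from rfl,
      show Int.sign (-3) = -1 from rfl, show Int.sign (-2) = -1 from rfl,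
      show Int.sign (-1) = -1 from rfl, show Int.sign (1:ℤ) = 1 from rfl,
      show Int.sign (2:ℤ) = 1 from rfl, show Int.sign (3:ℤ) = 1 from rfl]
    try ring
  have hT2B3 : C 2 * κ 2 ^ ((r 2 : ℝ) + 1/2) = C 3 * κ 3 ^ ((1:ℝ)/2) := by
    apply log_eq_imp (by have := hCpos 2; have := hκ 2; positivity)
      (by have := hCpos 3; have := hκ 3; positivity)
    rw [hlog, hlog, Fin.sum_univ_four, Fin.sum_univ_four]
    norm_num [show ((0:Fin 4):ℤ) = 0 from rfl, show ((1:Fin 4):ℤ) = 1 from rfl,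
      show ((2:Fin 4):ℤ) = 2 from rfl, show ((3:Fin 4):ℤ) = 3 from rfl,
      show Int.sign (-3) = -1 from rfl, show Int.sign (-2) = -1 from rfl,
      show Int.sign (-1) = -1 from rfl, show Int.sign (1:ℤ) = 1 from rfl,
      show Int.sign (2:ℤ) = 1 from rfl, show Int.sign (3:ℤ) = 1 from rfl]
    try ring
  have hT3 : C 3 * κ 3 ^ ((r 3 : ℝ) + 1/2) = Real.sqrt K * q := by
    apply log_eq_imp (by have := hCpos 3; have := hκ 3; positivity)
      (by positivity)
    rw [hlog, Real.log_mul (by positivity) (by positivity), Real.log_sqrt hK0.le,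
      hlogK, Fin.sum_univ_four, Fin.sum_univ_four]
    norm_num [show ((0:Fin 4):ℤ) = 0 from rfl, show ((1:Fin 4):ℤ) = 1 from rfl,
      show ((2:Fin 4):ℤ) = 2 from rfl, show ((3:Fin 4):ℤ) = 3 from rfl,
      show Int.sign (-3) = -1 from rfl, show Int.sign (-2) = -1 from rfl,
      show Int.sign (-1) = -1 from rfl, show Int.sign (1:ℤ) = 1 from rfl,
      show Int.sign (2:ℤ) = 1 from rfl, show Int.sign (3:ℤ) = 1 from rfl]
    try ring
  have hB0 : C 0 * κ 0 ^ ((1:ℝ)/2) = q / Real.sqrt K := by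
    apply log_eq_imp (by have := hCpos 0; have := hκ 0; positivity)
      (by positivity)
    rw [hlog, Real.log_div (by positivity) (by positivity), Real.log_sqrt hK0.le,
      hlogK, Fin.sum_univ_four, Fin.sum_univ_four]
    norm_num [show ((0:Fin 4):ℤ) = 0 from rfl, show ((1:Fin 4):ℤ) = 1 from rfl,
      show ((2:Fin 4):ℤ) = 2 from rfl, show ((3:Fin 4):ℤ) = 3 from rfl,
      show Int.sign (-3) = -1 from rfl, show Int.sign (-2) = -1 from rfl,
      show Int.sign (-1) = -1 from rfl, show Int.sign (1:ℤ) = 1 from rfl,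
      show Int.sign (2:ℤ) = 1 from rfl, show Int.sign (3:ℤ) = 1 from rfl]
    try ring
  rw [hT0B1, hT1B2, hT2B3, hT3, hB0]
  ring
end
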